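/- For every k, m, n ∈ ℕ and every fixed q ∈ C_c^∞(ℝ) with support contained in [3/4, 4/3], there is a constant C > 0, depending only on k, m, n and q, such that for every nonzero real number a, setting ν = ia and g(ξ) = q(ξ)·(ξ^{ν+1} − 1) for ξ > 0 (and g = 0 for ξ ≤ 0), one has ‖V̂^k X̂^m Û^n g‖_{L²(ℝ)} ≤ C·(1 + |a|)^{k+m+n}, where L²(ℝ) is with respect to Lebesgue measure. -/

import Mathlib

open Complex Finset MeasureTheory

/-- The operator `V̂ f (ξ) = -i ξ f(ξ)`. -/
noncomputable def hatV (f : ℝ → ℂ) : ℝ → ℂ := fun ξ => -Complex.I * (ξ : ℂ) * f ξ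

/-- The operator `X̂ f (ξ) = (ν−1) f(ξ) − 2ξ f′(ξ)`. -/
noncomputable def hatX (ν : ℂ) (f : ℝ → ℂ) : ℝ → ℂ :=
  fun ξ => (ν - 1) * f ξ - 2 * (ξ : ℂ) * deriv f ξ

/-- The operator `Û f (ξ) = i((ν−1)·f′(ξ) − ξ·f″(ξ))`. -/
noncomputable def hatU (ν : ℂ) (f : ℝ → ℂ) : ℝ → ℂ :=
  fun ξ => Complex.I * ((ν - 1) * deriv f ξ - (ξ : ℂ) * deriv (deriv f) ξ)

/-- The `L²(J, dξ)` norm (Lebesgue measure), valued in `ℝ≥0∞`. -/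
noncomputable def L2 (h : ℝ → ℂ) (J : Set ℝ) : ENNReal :=
  (∫⁻ ξ in J, ENNReal.ofReal (‖h ξ‖ ^ 2)) ^ (1 / 2 : ℝ)

/-- The function `g(ξ) = q(ξ)·(ξ^{ν+1} − 1)` for `ξ > 0` (and `0` for `ξ ≤ 0`),
where `ν = ia`. -/
noncomputable def gfun (q : ℝ → ℂ) (a : ℝ) : ℝ → ℂ :=
  fun ξ => if 0 < ξ then q ξ * ((ξ : ℂ) ^ (Complex.I * a + 1) - 1) else 0

/-!
For `ξ > 0`, `g = u ξ^ν + v` with `u = ξ q` and `v = -q` smooth and supported in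
`K = [3/4, 4/3]`. Conjugation by `ξ^ν` commutes with `V̂` and turns `X̂_ν, Û_ν` into
`X̂_{-ν}, Û_{-ν}`, so `V̂^k X̂_ν^m Û_ν^n g = (V̂^k X̂_{-ν}^m Û_{-ν}^n u) ξ^ν + V̂^k X̂_ν^m Û_ν^n v`,
and `|ξ^ν| = 1`. Each of `X̂_ν, Û_ν` has the form `A + ν B` with `A, B` preserving smooth functions
supported in `K`, so `n + m` of them applied to a fixed such function give a polynomial in `ν` of
degree `n + m` whose coefficients are fixed bounded functions supported in `K`. This yields the
pointwise bound `C (1 + |a|)^(n+m)` on a set of measure `< 1`.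
-/

open Function Set Filter Topology
open scoped ContDiff

noncomputable section

theorem Set.MapsTo.iterate_apply_eq {α β : Type*} {s : Set β} {φ : β → α} {A : α → α}
    {B : β → β} (hB : MapsTo B s s) (h : ∀ x ∈ s, A (φ x) = φ (B x)) (n : ℕ) :
    ∀ x ∈ s, A^[n] (φ x) = φ (B^[n] x) := by
  induction n with
  | zero => exact fun _ _ => rfl
  | succ n ih =>
    intro x hx
    rw [iterate_succ_apply, iterate_succ_apply, h x hx, ih (B x) (hB hx)]

theorem Set.MapsTo.iterate_map_add {M : Type*} [Add M] {s : Set M} {A : M → M}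
    (hA : MapsTo A s s) (hadd : ∀ x ∈ s, ∀ y ∈ s, A (x + y) = A x + A y) (n : ℕ) :
    ∀ x ∈ s, ∀ y ∈ s, A^[n] (x + y) = A^[n] x + A^[n] y := fun x hx y hy => by
  simpa only [Prod.map_iterate, Prod.map_fst, Prod.map_snd] using
    (hA.prodMap hA).iterate_apply_eq (φ := fun z => z.1 + z.2) (B := Prod.map A A)
      (fun z hz => hadd _ hz.1 _ hz.2) n (x, y) ⟨hx, hy⟩

def smoothSupportedIn (K : Set ℝ) : Submodule ℂ (ℝ → ℂ) where
  carrier := {f | ContDiff ℝ ∞ f ∧ support f ⊆ K}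
  add_mem' hf hg := ⟨hf.1.add hg.1, (support_add _ _).trans (union_subset hf.2 hg.2)⟩
  zero_mem' := ⟨contDiff_const, by simp⟩
  smul_mem' c _ hf := ⟨contDiff_const.smul hf.1, (support_const_smul_subset c _).trans hf.2⟩

/-- No cutoff at `ξ ≤ 0`: it is only applied to functions supported in some `K ⊆ (0, ∞)`. -/
def mulCpow (ν : ℂ) (u : ℝ → ℂ) : ℝ → ℂ := fun ξ => u ξ * (ξ : ℂ) ^ ν

namespace smoothSupportedIn

variable {K : Set ℝ} {f : ℝ → ℂ}

theorem apply_eq_zero (hf : f ∈ smoothSupportedIn K) {ξ : ℝ} (hξ : ξ ∉ K) : f ξ = 0 :=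
  notMem_support.1 fun h => hξ (hf.2 h)

theorem differentiable (hf : f ∈ smoothSupportedIn K) : Differentiable ℝ f :=
  hf.1.differentiable (by simp)

theorem deriv_mem (hK : IsClosed K) (hf : f ∈ smoothSupportedIn K) :
    deriv f ∈ smoothSupportedIn K :=
  ⟨hf.1.iterate_deriv 1, support_deriv_subset.trans (closure_minimal hf.2 hK)⟩

theorem ofReal_mul_mem (hf : f ∈ smoothSupportedIn K) :
    (fun ξ : ℝ => (ξ : ℂ) * f ξ) ∈ smoothSupportedIn K :=
  ⟨ofRealCLM.contDiff.mul hf.1, (support_mul_subset_right _ _).trans hf.2⟩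

theorem eventuallyEq_zero (hK : IsClosed K) (hf : f ∈ smoothSupportedIn K) {ξ : ℝ}
    (hξ : ξ ∉ K) : f =ᶠ[𝓝 ξ] 0 :=
  eventually_of_mem (hK.isOpen_compl.mem_nhds hξ) fun _ hx => apply_eq_zero hf hx

theorem mulCpow_mem (hK : IsClosed K) (hK0 : K ⊆ Ioi 0) (ν : ℂ) (hf : f ∈ smoothSupportedIn K) :
    mulCpow ν f ∈ smoothSupportedIn K := by
  refine ⟨contDiff_iff_contDiffAt.2 fun ξ => ?_, (support_mul_subset_left _ _).trans hf.2⟩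
  rcases lt_or_ge 0 ξ with hξ | hξ
  · have hpow : ContDiffAt ℝ ∞ (fun x : ℝ => (x : ℂ) ^ ν) ξ :=
      ((analyticAt_id.cpow analyticAt_const (ofReal_mem_slitPlane.2 hξ)).contDiffAt.restrict_scalars
        ℝ).comp ξ ofRealCLM.contDiff.contDiffAt
    exact hf.1.contDiffAt.mul hpow
  · have hξK : ξ ∉ K := fun h => (hK0 h).not_ge hξ
    refine (contDiffAt_const (c := (0 : ℂ))).congr_of_eventuallyEq ?_
    filter_upwards [eventuallyEq_zero hK hf hξK] with x hx
    simp [mulCpow, hx]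

end smoothSupportedIn

theorem hasDerivAt_mulCpow {u : ℝ → ℂ} {ξ : ℝ} (hu : DifferentiableAt ℝ u ξ) (hξ : 0 < ξ) (ν : ℂ) :
    HasDerivAt (mulCpow ν u) (mulCpow ν (deriv u) ξ + ν * mulCpow (ν - 1) u ξ) ξ := by
  have hpow : HasDerivAt (fun x : ℝ => (x : ℂ) ^ ν) (ν * (ξ : ℂ) ^ (ν - 1)) ξ := by
    simpa using ((hasDerivAt_id (ξ : ℂ)).cpow_const (ofReal_mem_slitPlane.2 hξ)).comp_ofReal
  exact (hu.hasDerivAt.mul hpow).congr_deriv (by simp only [mulCpow]; ring)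

theorem ofReal_mul_cpow_sub_one {ξ : ℝ} (hξ : 0 < ξ) (ν : ℂ) :
    (ξ : ℂ) * (ξ : ℂ) ^ (ν - 1) = (ξ : ℂ) ^ ν := by
  rw [Complex.cpow_sub _ _ (ofReal_ne_zero.2 hξ.ne'), cpow_one,
    mul_div_cancel₀ _ (ofReal_ne_zero.2 hξ.ne')]

def IsPolynomialFamily (K : Set ℝ) (p : ℕ) (F : ℂ → ℝ → ℂ) : Prop :=
  ∃ w : ℕ → ℝ → ℂ, (∀ j, w j ∈ smoothSupportedIn K) ∧
    ∀ ν ξ, F ν ξ = ∑ j ∈ Finset.range (p + 1), ν ^ j * w j ξ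

namespace IsPolynomialFamily

variable {K : Set ℝ} {p : ℕ} {F G : ℂ → ℝ → ℂ}

theorem const {f : ℝ → ℂ} (hf : f ∈ smoothSupportedIn K) : IsPolynomialFamily K 0 fun _ => f :=
  ⟨fun _ => f, fun _ => hf, fun ν ξ => by simp⟩

theorem mem (hF : IsPolynomialFamily K p F) (ν : ℂ) : F ν ∈ smoothSupportedIn K := by
  obtain ⟨w, hw, hFw⟩ := hF
  have : F ν = ∑ j ∈ Finset.range (p + 1), ν ^ j • w j := by
    ext ξ; simp [hFw, Finset.sum_apply]
  rw [this]
  exact Submodule.sum_mem _ fun j _ => Submodule.smul_mem _ _ (hw j)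

theorem add (hF : IsPolynomialFamily K p F) (hG : IsPolynomialFamily K p G) :
    IsPolynomialFamily K p fun ν ξ => F ν ξ + G ν ξ := by
  obtain ⟨w, hw, hFw⟩ := hF
  obtain ⟨w', hw', hGw⟩ := hG
  exact ⟨w + w', fun j => add_mem (hw j) (hw' j), fun ν ξ => by
    simp [hFw, hGw, Finset.sum_add_distrib, mul_add]⟩

theorem const_mul (c : ℂ) (hF : IsPolynomialFamily K p F) :
    IsPolynomialFamily K p fun ν ξ => c * F ν ξ := by
  obtain ⟨w, hw, hFw⟩ := hF
  exact ⟨fun j => c • w j, fun j => Submodule.smul_mem _ c (hw j), fun ν ξ => by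
    simp only [hFw, Finset.mul_sum, Pi.smul_apply, smul_eq_mul]; ring_nf⟩

theorem succ (hF : IsPolynomialFamily K p F) : IsPolynomialFamily K (p + 1) F := by
  obtain ⟨w, hw, hFw⟩ := hF
  refine ⟨fun j => if j ≤ p then w j else 0, fun j => ?_, fun ν ξ => ?_⟩
  · beta_reduce
    split_ifs
    exacts [hw j, zero_mem _]
  · rw [Finset.sum_range_succ, hFw]
    simp only [show ¬p + 1 ≤ p by omega, if_false, Pi.zero_apply, mul_zero, add_zero]
    exact Finset.sum_congr rfl fun j hj => by
      rw [if_pos (Nat.lt_succ_iff.1 (Finset.mem_range.1 hj))]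

theorem param_mul (hF : IsPolynomialFamily K p F) :
    IsPolynomialFamily K (p + 1) fun ν ξ => ν * F ν ξ := by
  obtain ⟨w, hw, hFw⟩ := hF
  refine ⟨fun j => if j = 0 then 0 else w (j - 1), fun j => ?_, fun ν ξ => ?_⟩
  · beta_reduce
    split_ifs
    exacts [zero_mem _, hw _]
  · simp only [Finset.sum_range_succ' _ (p + 1), hFw, Finset.mul_sum]
    simp only [pow_succ, Nat.add_eq_zero_iff, one_ne_zero, and_false, ↓reduceIte,
      add_tsub_cancel_right, pow_zero, Pi.zero_apply, mul_zero, add_zero]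
    exact Finset.sum_congr rfl fun j _ => by ring

theorem ofReal_mul (hF : IsPolynomialFamily K p F) :
    IsPolynomialFamily K p fun ν ξ => (ξ : ℂ) * F ν ξ := by
  obtain ⟨w, hw, hFw⟩ := hF
  exact ⟨fun j ξ => ξ * w j ξ, fun j => smoothSupportedIn.ofReal_mul_mem (hw j), fun ν ξ => by
    simp only [hFw, Finset.mul_sum]; ring_nf⟩

theorem deriv (hK : IsClosed K) (hF : IsPolynomialFamily K p F) :
    IsPolynomialFamily K p fun ν => deriv (F ν) := by
  obtain ⟨w, hw, hFw⟩ := hF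
  refine ⟨fun j => _root_.deriv (w j), fun j => smoothSupportedIn.deriv_mem hK (hw j),
    fun ν ξ => ?_⟩
  have hdiff (j : ℕ) : Differentiable ℝ (w j) := smoothSupportedIn.differentiable (hw j)
  change _root_.deriv (F ν) ξ = _
  rw [show F ν = fun ξ => ∑ j ∈ Finset.range (p + 1), ν ^ j * w j ξ from funext (hFw ν),
    deriv_fun_sum fun j _ => ((hdiff j).const_mul _).differentiableAt]
  exact Finset.sum_congr rfl fun j _ => deriv_const_mul _ (hdiff j).differentiableAt

theorem exists_norm_le (hK : IsCompact K) (hF : IsPolynomialFamily K p F) :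
    ∃ C, 0 ≤ C ∧ ∀ ν ξ, ‖F ν ξ‖ ≤ C * (1 + ‖ν‖) ^ p := by
  obtain ⟨w, hw, hFw⟩ := hF
  have hbound (j : ℕ) : ∃ M, ∀ ξ, ‖w j ξ‖ ≤ M :=
    (hw j).1.continuous.bounded_above_of_compact_support
      (HasCompactSupport.intro' hK hK.isClosed fun _ hξ =>
        smoothSupportedIn.apply_eq_zero (hw j) hξ)
  choose M hM using hbound
  have hM0 (j : ℕ) : 0 ≤ M j := (norm_nonneg _).trans (hM j 0)
  refine ⟨∑ j ∈ Finset.range (p + 1), M j, Finset.sum_nonneg fun j _ => hM0 j, fun ν ξ => ?_⟩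
  rw [hFw, Finset.sum_mul]
  refine (norm_sum_le _ _).trans (Finset.sum_le_sum fun j hj => ?_)
  rw [norm_mul, norm_pow, mul_comm]
  have hjp : j ≤ p := Nat.lt_succ_iff.1 (Finset.mem_range.1 hj)
  have hν : ‖ν‖ ^ j ≤ (1 + ‖ν‖) ^ p :=
    (pow_le_pow_left₀ (norm_nonneg _) (by linarith) j).trans
      (pow_le_pow_right₀ (by linarith [norm_nonneg ν]) hjp)
  exact mul_le_mul (hM j ξ) hν (by positivity) (hM0 j)

theorem hatV (hF : IsPolynomialFamily K p F) :
    IsPolynomialFamily K p fun ν => _root_.hatV (F ν) := by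
  convert hF.ofReal_mul.const_mul (-I) using 3
  simp only [_root_.hatV]; ring

theorem hatX (hK : IsClosed K) (hF : IsPolynomialFamily K p F) :
    IsPolynomialFamily K (p + 1) fun ν => _root_.hatX ν (F ν) := by
  convert hF.param_mul.add ((hF.const_mul (-1)).add ((hF.deriv hK).ofReal_mul.const_mul (-2))).succ
    using 3
  simp only [_root_.hatX]; ring

theorem hatU (hK : IsClosed K) (hF : IsPolynomialFamily K p F) :
    IsPolynomialFamily K (p + 1) fun ν => _root_.hatU ν (F ν) := by
  have hF' := hF.deriv hK
  convert (hF'.const_mul I).param_mul.add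
    ((hF'.add ((hF'.deriv hK).ofReal_mul)).const_mul (-I)).succ using 3
  simp only [_root_.hatU]; ring

theorem iterate {A : ℂ → (ℝ → ℂ) → ℝ → ℂ} {d : ℕ}
    (hA : ∀ {q G}, IsPolynomialFamily K q G → IsPolynomialFamily K (q + d) fun ν => A ν (G ν))
    (hF : IsPolynomialFamily K p F) (n : ℕ) :
    IsPolynomialFamily K (p + n * d) fun ν => (A ν)^[n] (F ν) := by
  induction n with
  | zero => simpa using hF
  | succ n ih =>
    simp only [iterate_succ_apply']
    convert hA ih using 1
    ring

end IsPolynomialFamily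

def hatVXU (k m n : ℕ) (ν : ℂ) (f : ℝ → ℂ) : ℝ → ℂ :=
  hatV^[k] ((hatX ν)^[m] ((hatU ν)^[n] f))

theorem IsPolynomialFamily.hatVXU {K : Set ℝ} {p : ℕ} {F : ℂ → ℝ → ℂ} (hK : IsClosed K)
    (hF : IsPolynomialFamily K p F) (k m n : ℕ) :
    IsPolynomialFamily K (p + n + m) fun ν => _root_.hatVXU k m n ν (F ν) := by
  simpa only [_root_.hatVXU, mul_one, mul_zero, add_zero] using
    ((hF.iterate (hatU hK) n).iterate (hatX hK) m).iterate (d := 0) hatV k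

theorem hatV_add (f g : ℝ → ℂ) : hatV (f + g) = hatV f + hatV g := by
  ext ξ; simp only [hatV, Pi.add_apply]; ring

theorem hatX_add {f g : ℝ → ℂ} (hf : Differentiable ℝ f) (hg : Differentiable ℝ g) (ν : ℂ) :
    hatX ν (f + g) = hatX ν f + hatX ν g := by
  ext ξ; simp only [hatX, Pi.add_apply, deriv_add (hf ξ) (hg ξ)]; ring

theorem hatU_add {f g : ℝ → ℂ} (hf : ContDiff ℝ 2 f) (hg : ContDiff ℝ 2 g) (ν : ℂ) :
    hatU ν (f + g) = hatU ν f + hatU ν g := by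
  have hf' := hf.differentiable two_ne_zero
  have hg' := hg.differentiable two_ne_zero
  have hderiv : deriv (f + g) = deriv f + deriv g := by ext ξ; exact deriv_add (hf' ξ) (hg' ξ)
  ext ξ
  simp only [hatU, Pi.add_apply, hderiv,
    deriv_add (hf.differentiable_deriv_two ξ) (hg.differentiable_deriv_two ξ)]
  ring

theorem hatV_mulCpow (ν : ℂ) (u : ℝ → ℂ) : hatV (mulCpow ν u) = mulCpow ν (hatV u) := by
  ext ξ; simp only [hatV, mulCpow]; ring

namespace smoothSupportedIn

variable {K : Set ℝ} {f g u : ℝ → ℂ}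

theorem mapsTo_hatV : MapsTo hatV (smoothSupportedIn K) (smoothSupportedIn K) :=
  fun _ hf => (IsPolynomialFamily.const hf).hatV.mem 0

theorem mapsTo_hatX (hK : IsClosed K) (ν : ℂ) :
    MapsTo (hatX ν) (smoothSupportedIn K) (smoothSupportedIn K) :=
  fun _ hf => ((IsPolynomialFamily.const hf).hatX hK).mem ν

theorem mapsTo_hatU (hK : IsClosed K) (ν : ℂ) :
    MapsTo (hatU ν) (smoothSupportedIn K) (smoothSupportedIn K) :=
  fun _ hf => ((IsPolynomialFamily.const hf).hatU hK).mem ν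

theorem hatVXU_mem (hK : IsClosed K) (k m n : ℕ) (ν : ℂ) (hf : f ∈ smoothSupportedIn K) :
    hatVXU k m n ν f ∈ smoothSupportedIn K :=
  ((IsPolynomialFamily.const hf).hatVXU hK k m n).mem ν

theorem hatVXU_add (hK : IsClosed K) (k m n : ℕ) (ν : ℂ) (hf : f ∈ smoothSupportedIn K)
    (hg : g ∈ smoothSupportedIn K) :
    hatVXU k m n ν (f + g) = hatVXU k m n ν f + hatVXU k m n ν g := by
  have hD (h : ℝ → ℂ) (hh : h ∈ smoothSupportedIn K) : ContDiff ℝ 2 h := hh.1.of_le ENat.LEInfty.out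
  have hU := (mapsTo_hatU hK ν).iterate n
  have hX := (mapsTo_hatX hK ν).iterate m
  rw [hatVXU, (mapsTo_hatU hK ν).iterate_map_add (fun _ h₁ _ h₂ => hatU_add (hD _ h₁) (hD _ h₂) ν)
      n f hf g hg,
    (mapsTo_hatX hK ν).iterate_map_add
      (fun _ h₁ _ h₂ => hatX_add (differentiable h₁) (differentiable h₂) ν) m _ (hU hf) _ (hU hg),
    mapsTo_hatV.iterate_map_add (fun _ _ _ _ => hatV_add _ _) k _ (hX (hU hf)) _ (hX (hU hg))]
  rfl

theorem eq_of_forall_pos (hK0 : K ⊆ Ioi 0) (hf : f ∈ smoothSupportedIn K)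
    (hg : g ∈ smoothSupportedIn K) (h : ∀ ξ, 0 < ξ → f ξ = g ξ) : f = g := by
  ext ξ
  rcases lt_or_ge 0 ξ with hξ | hξ
  · exact h ξ hξ
  · have hξK : ξ ∉ K := fun h => not_lt.2 hξ (hK0 h)
    rw [apply_eq_zero hf hξK, apply_eq_zero hg hξK]

theorem hatX_mulCpow (hK : IsClosed K) (hK0 : K ⊆ Ioi 0) (ν : ℂ)
    (hu : u ∈ smoothSupportedIn K) :
    hatX ν (mulCpow ν u) = mulCpow ν (hatX (-ν) u) := by
  refine eq_of_forall_pos hK0 (mapsTo_hatX hK ν (mulCpow_mem hK hK0 ν hu))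
    (mulCpow_mem hK hK0 ν (mapsTo_hatX hK _ hu)) fun ξ hξ => ?_
  simp only [hatX, mulCpow, (hasDerivAt_mulCpow (differentiable hu ξ) hξ ν).deriv]
  rw [← ofReal_mul_cpow_sub_one hξ ν]
  ring

theorem hatU_mulCpow (hK : IsClosed K) (hK0 : K ⊆ Ioi 0) (ν : ℂ)
    (hu : u ∈ smoothSupportedIn K) :
    hatU ν (mulCpow ν u) = mulCpow ν (hatU (-ν) u) := by
  refine eq_of_forall_pos hK0 (mapsTo_hatU hK ν (mulCpow_mem hK hK0 ν hu))
    (mulCpow_mem hK hK0 ν (mapsTo_hatU hK _ hu)) fun ξ hξ => ?_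
  have hderiv : deriv (mulCpow ν u) =ᶠ[𝓝 ξ]
      fun x => mulCpow ν (deriv u) x + ν * mulCpow (ν - 1) u x := by
    filter_upwards [Ioi_mem_nhds hξ] with x hx
    exact (hasDerivAt_mulCpow (differentiable hu x) hx ν).deriv
  have hderiv2 : HasDerivAt (fun x => mulCpow ν (deriv u) x + ν * mulCpow (ν - 1) u x) _ ξ :=
    (hasDerivAt_mulCpow (differentiable (deriv_mem hK hu) ξ) hξ ν).add
      ((hasDerivAt_mulCpow (differentiable hu ξ) hξ (ν - 1)).const_mul ν)
  simp only [hatU]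
  rw [hderiv.deriv_eq, hderiv2.deriv, hderiv.eq_of_nhds]
  simp only [mulCpow, hatU]
  rw [← ofReal_mul_cpow_sub_one hξ ν, ← ofReal_mul_cpow_sub_one hξ (ν - 1)]
  ring

theorem hatVXU_mulCpow (hK : IsClosed K) (hK0 : K ⊆ Ioi 0) (k m n : ℕ) (ν : ℂ)
    (hu : u ∈ smoothSupportedIn K) :
    hatVXU k m n ν (mulCpow ν u) = mulCpow ν (hatVXU k m n (-ν) u) := by
  have hU := (mapsTo_hatU hK (-ν)).iterate n hu
  rw [hatVXU, hatVXU,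
    (mapsTo_hatU hK (-ν)).iterate_apply_eq (φ := mulCpow ν)
      (fun _ h => hatU_mulCpow hK hK0 ν h) n u hu,
    (mapsTo_hatX hK (-ν)).iterate_apply_eq (φ := mulCpow ν)
      (fun _ h => hatX_mulCpow hK hK0 ν h) m _ hU,
    mapsTo_hatV.iterate_apply_eq (φ := mulCpow ν) (fun u _ => hatV_mulCpow ν u) k _
      ((mapsTo_hatX hK (-ν)).iterate m hU)]

end smoothSupportedIn

theorem norm_mulCpow_of_re_eq_zero {u : ℝ → ℂ} (hu : support u ⊆ Ioi 0) {ν : ℂ} (hν : ν.re = 0)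
    (ξ : ℝ) : ‖mulCpow ν u ξ‖ = ‖u ξ‖ := by
  by_cases hξ : 0 < ξ
  · rw [mulCpow, norm_mul, norm_cpow_eq_rpow_re_of_pos hξ, hν, Real.rpow_zero, mul_one]
  · simp [mulCpow, notMem_support.1 fun h => hξ (hu h)]

theorem exists_norm_hatVXU_mulCpow_add_le {K : Set ℝ} {u v : ℝ → ℂ} (hK : IsCompact K)
    (hK0 : K ⊆ Ioi 0) (hu : u ∈ smoothSupportedIn K) (hv : v ∈ smoothSupportedIn K)
    (k m n : ℕ) :
    ∃ C > 0, ∀ ν : ℂ, ν.re = 0 → ∀ ξ,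
      ‖hatVXU k m n ν (mulCpow ν u + v) ξ‖ ≤ C * (1 + ‖ν‖) ^ (n + m) := by
  obtain ⟨Cu, hCu0, hCu⟩ :=
    ((IsPolynomialFamily.const hu).hatVXU hK.isClosed k m n).exists_norm_le hK
  obtain ⟨Cv, hCv0, hCv⟩ :=
    ((IsPolynomialFamily.const hv).hatVXU hK.isClosed k m n).exists_norm_le hK
  refine ⟨Cu + Cv + 1, by positivity, fun ν hν ξ => ?_⟩
  have hTu := smoothSupportedIn.hatVXU_mem hK.isClosed k m n (-ν) hu
  rw [smoothSupportedIn.hatVXU_add hK.isClosed k m n ν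
      (smoothSupportedIn.mulCpow_mem hK.isClosed hK0 ν hu) hv,
    smoothSupportedIn.hatVXU_mulCpow hK.isClosed hK0 k m n ν hu, Pi.add_apply]
  have hpow : 0 ≤ (1 + ‖ν‖) ^ (n + m) := by positivity
  calc _ ≤ ‖mulCpow ν (hatVXU k m n (-ν) u) ξ‖ + ‖hatVXU k m n ν v ξ‖ := norm_add_le _ _
    _ = ‖hatVXU k m n (-ν) u ξ‖ + ‖hatVXU k m n ν v ξ‖ := by
      rw [norm_mulCpow_of_re_eq_zero (hTu.2.trans hK0) hν]
    _ ≤ Cu * (1 + ‖ν‖) ^ (n + m) + Cv * (1 + ‖ν‖) ^ (n + m) := by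
      simpa using add_le_add (hCu (-ν) ξ) (hCv ν ξ)
    _ ≤ (Cu + Cv + 1) * (1 + ‖ν‖) ^ (n + m) := by nlinarith

theorem L2_univ_le_of_norm_le {h : ℝ → ℂ} {K : Set ℝ} {B : ℝ} (hK : MeasurableSet K)
    (hh : support h ⊆ K) (hB : ∀ ξ, ‖h ξ‖ ≤ B) :
    L2 h univ ≤ ENNReal.ofReal B * volume K ^ (1 / 2 : ℝ) := by
  have hB0 : 0 ≤ B := (norm_nonneg _).trans (hB 0)
  have hpt (ξ : ℝ) :
      ENNReal.ofReal (‖h ξ‖ ^ 2) ≤ K.indicator (fun _ => ENNReal.ofReal B ^ 2) ξ := by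
    by_cases hξ : ξ ∈ K
    · rw [indicator_of_mem hξ, ← ENNReal.ofReal_pow hB0]
      exact ENNReal.ofReal_le_ofReal (pow_le_pow_left₀ (norm_nonneg _) (hB ξ) 2)
    · simp [notMem_support.1 fun h => hξ (hh h)]
  calc L2 h univ ≤ (∫⁻ ξ, K.indicator (fun _ => ENNReal.ofReal B ^ 2) ξ) ^ (1 / 2 : ℝ) := by
        rw [L2, Measure.restrict_univ]
        exact ENNReal.rpow_le_rpow (lintegral_mono hpt) (by norm_num)
    _ = ENNReal.ofReal B * volume K ^ (1 / 2 : ℝ) := by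
        rw [lintegral_indicator_const hK, ENNReal.mul_rpow_of_nonneg _ _ (by norm_num),
          ← ENNReal.rpow_natCast, ← ENNReal.rpow_mul]
        norm_num

theorem gfun_eq_mulCpow_add {q : ℝ → ℂ} (hq : support q ⊆ Ioi 0) (a : ℝ) :
    gfun q a = mulCpow (I * a) (fun ξ => q ξ * ξ) + -q := by
  ext ξ
  by_cases hξ : 0 < ξ
  · simp only [gfun, if_pos hξ, mulCpow, Pi.add_apply, Pi.neg_apply,
      cpow_add _ _ (ofReal_ne_zero.2 hξ.ne'), cpow_one]
    ring
  · simp [gfun, mulCpow, hξ, notMem_support.1 fun h => hξ (hq h)]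

end

/-- Sobolev-type upper bound for `g(ξ) = q(ξ)(ξ^{ν+1} − 1)` with `ν = ia`:
`‖V̂^k X̂^m Û^n g‖_{L²(ℝ)} ≤ C (1+|a|)^{k+m+n}`. -/
theorem g_sobolev_upper_bound (k m n : ℕ) (q : ℝ → ℂ)
    (hq : ContDiff ℝ (⊤ : ℕ∞) q)
    (hsupp : Function.support q ⊆ Set.Icc (3 / 4 : ℝ) (4 / 3)) :
    ∃ C > 0, ∀ a : ℝ, a ≠ 0 →
      L2 (hatV^[k] ((hatX (Complex.I * a))^[m] ((hatU (Complex.I * a))^[n] (gfun q a))))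
          Set.univ ≤
        ENNReal.ofReal (C * (1 + |a|) ^ (k + m + n)) := by
  have hK0 : Icc (3 / 4 : ℝ) (4 / 3) ⊆ Ioi 0 := fun ξ hξ => lt_of_lt_of_le (by norm_num) hξ.1
  have hq' : q ∈ smoothSupportedIn (Icc (3 / 4 : ℝ) (4 / 3)) := ⟨hq, hsupp⟩
  have hu : (fun ξ : ℝ => q ξ * ξ) ∈ smoothSupportedIn (Icc (3 / 4 : ℝ) (4 / 3)) := by
    simpa only [mul_comm] using smoothSupportedIn.ofReal_mul_mem hq'
  obtain ⟨C, hC, hbound⟩ :=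
    exists_norm_hatVXU_mulCpow_add_le isCompact_Icc hK0 hu (neg_mem hq') k m n
  refine ⟨C, hC, fun a _ => ?_⟩
  have hν : (I * a).re = 0 := by simp
  have hνnorm : ‖I * (a : ℂ)‖ = |a| := by simp
  change L2 (hatVXU k m n (I * a) (gfun q a)) univ ≤ _
  rw [gfun_eq_mulCpow_add (hsupp.trans hK0)]
  refine (L2_univ_le_of_norm_le (K := Icc (3 / 4 : ℝ) (4 / 3)) measurableSet_Icc
    (smoothSupportedIn.hatVXU_mem isClosed_Icc k m n _ ?_).2 (hbound _ hν)).trans ?_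
  · exact add_mem (smoothSupportedIn.mulCpow_mem isClosed_Icc hK0 _ hu) (neg_mem hq')
  have hvol : volume (Icc (3 / 4 : ℝ) (4 / 3)) ^ (1 / 2 : ℝ) ≤ 1 := by
    rw [Real.volume_Icc]
    exact ENNReal.rpow_le_one (ENNReal.ofReal_le_one.2 (by norm_num)) (by norm_num)
  calc _ ≤ ENNReal.ofReal (C * (1 + ‖I * (a : ℂ)‖) ^ (n + m)) := mul_le_of_le_one_right' hvol
    _ ≤ ENNReal.ofReal (C * (1 + |a|) ^ (k + m + n)) := by
      rw [hνnorm]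
      exact ENNReal.ofReal_le_ofReal (mul_le_mul_of_nonneg_left
        (pow_le_pow_right₀ (by linarith [abs_nonneg a]) (by omega)) hC.le)
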